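/- arXiv:2605.29594 — 3 statements merged into one kernel-verified Lean document; each statement's English description precedes it below -/
import Mathlib

section
/- Second moment identity for planar orthogonal polynomials: let n ≥ 2 and let w : ℂ → [0,∞) be measurable with ∫_ℂ (1+|z|)^{2n+4}·w(z) dA(z) < ∞. Let P_0, …, P_{n+2} be a monic orthogonal family up to degree n+2 for w. Then ∫_ℂ z²·|P_n(z)|²·w(z) dA(z) = (ℬ_n − ℬ_{n+2} − (𝒜_n − 𝒜_{n+2})·𝒜_{n+1})·h_n. -/
/-!
Reducing `z² P_n` from the top by the monic family gives `z² P_n = P_{n+2} + c P_{n+1} + r` with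
`c = 𝒜_n − 𝒜_{n+2}` and `deg r ≤ n`. Pairing with `P_n` kills the first two terms. A polynomial
of degree `≤ n` is, by the same reduction, its `z^n` coefficient times `P_n` plus a combination
of `P_0, …, P_{n-1}`, so its pairing with `P_n` is that coefficient times `h_n`. Hence the
integral is `r_n h_n`, and `r_n = ℬ_n − ℬ_{n+2} − c 𝒜_{n+1}`.
-/

open MeasureTheory

/-- The planar area measure `dA` on `ℂ`: two-dimensional Lebesgue measure divided by `π`. -/
noncomputable def dA : Measure ℂ :=
  (ENNReal.ofReal (1 / Real.pi)) • (volume : Measure ℂ)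

/-- The Coulomb gas partition function
`𝒵_N(V) = ∫_{ℂ^N} ∏_{j<k} |z_j − z_k|² ∏_j e^{−N·V(z_j)} dA(z_j)`. -/
noncomputable def Zpart (N : ℕ) (V : ℂ → ℝ) : ℝ :=
  ∫ z : Fin N → ℂ,
    (∏ p ∈ Finset.univ.filter (fun p : Fin N × Fin N => p.1 < p.2),
      ‖z p.1 - z p.2‖ ^ 2) *
    ∏ j, Real.exp (-(N : ℝ) * V (z j)) ∂(Measure.pi fun _ => dA)

/-- `P_0, …, P_M` is a monic orthogonal family up to degree `M` for the weight `w`: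
each `P_n` is monic of degree `n`, and
`∫_ℂ P_n(z)·conj(P_m(z))·w(z) dA(z) = h_n·δ_{nm}` with `0 < h_n < ∞`. -/
def MonicOrth (M : ℕ) (w : ℂ → ℝ) (P : ℕ → Polynomial ℂ) (h : ℕ → ℝ) : Prop :=
  (∀ n, n ≤ M → (P n).Monic ∧ (P n).natDegree = n) ∧
  (∀ n, n ≤ M → 0 < h n) ∧
  (∀ n, n ≤ M → ∀ m, m ≤ M →
    ∫ z : ℂ, (P n).eval z * (starRingEnd ℂ) ((P m).eval z) * (w z : ℂ) ∂dA =
      if n = m then (h n : ℝ) else 0)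

open Polynomial ComplexConjugate

namespace Polynomial

theorem exists_norm_eval_le_mul_one_add_norm_pow {R : Type*} [NormedRing R] [NormOneClass R]
    (p : R[X]) {d : ℕ} (hd : p.natDegree ≤ d) :
    ∃ C, ∀ z : R, ‖p.eval z‖ ≤ C * (1 + ‖z‖) ^ d := by
  refine ⟨∑ i ∈ Finset.range (p.natDegree + 1), ‖p.coeff i‖, fun z => ?_⟩
  rw [eval_eq_sum_range, Finset.sum_mul]
  refine (norm_sum_le _ _).trans (Finset.sum_le_sum fun i hi => ?_)
  have hid : i ≤ d := by have := Finset.mem_range.mp hi; omega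
  have hz : 1 ≤ 1 + ‖z‖ := le_add_of_nonneg_right (norm_nonneg z)
  calc ‖p.coeff i * z ^ i‖ ≤ ‖p.coeff i‖ * ‖z‖ ^ i :=
        (norm_mul_le _ _).trans (by gcongr; exact norm_pow_le _ _)
    _ ≤ ‖p.coeff i‖ * (1 + ‖z‖) ^ i := by gcongr; linarith
    _ ≤ ‖p.coeff i‖ * (1 + ‖z‖) ^ d := by gcongr

theorem degree_sub_C_coeff_mul_lt {R : Type*} [Ring R] {f q : R[X]} {m : ℕ}
    (hq : q.Monic) (hqm : q.natDegree = m) (hf : f.degree ≤ m) :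
    (f - C (f.coeff m) * q).degree < m := by
  rw [degree_lt_iff_coeff_zero]
  intro i hi
  rcases hi.eq_or_lt with rfl | hlt
  · subst hqm
    simp [coeff_C_mul, hq.coeff_natDegree]
  · have hfi : f.coeff i = 0 := coeff_eq_zero_of_degree_lt (hf.trans_lt (by exact_mod_cast hlt))
    have hqi : q.coeff i = 0 := coeff_eq_zero_of_natDegree_lt (hqm ▸ hlt)
    simp [coeff_C_mul, hfi, hqi]

end Polynomial

noncomputable def weightedInner (μ : Measure ℂ) (w : ℂ → ℝ) (p q : ℂ[X]) : ℂ :=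
  ∫ z, p.eval z * conj (q.eval z) * (w z : ℂ) ∂μ

section WeightedInner

variable {μ : Measure ℂ} {w : ℂ → ℝ} {N : ℕ}

theorem integrable_eval_mul_conj_eval_mul (hw : Measurable w)
    (hint : Integrable (fun z : ℂ => (1 + ‖z‖) ^ (2 * N) * w z) μ)
    {p q : ℂ[X]} (hp : p.natDegree ≤ N) (hq : q.natDegree ≤ N) :
    Integrable (fun z => p.eval z * conj (q.eval z) * (w z : ℂ)) μ := by
  obtain ⟨Cp, hCp⟩ := p.exists_norm_eval_le_mul_one_add_norm_pow hp
  obtain ⟨Cq, hCq⟩ := q.exists_norm_eval_le_mul_one_add_norm_pow hq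
  refine (hint.norm.const_mul (Cp * Cq)).mono' ?_ (Filter.Eventually.of_forall fun z => ?_)
  · exact (p.continuous.mul (Complex.continuous_conj.comp q.continuous)).aestronglyMeasurable.mul
      (Complex.measurable_ofReal.comp hw).aestronglyMeasurable
  · have hCp_nonneg := (norm_nonneg _).trans (hCp z)
    calc ‖p.eval z * conj (q.eval z) * (w z : ℂ)‖ = ‖p.eval z‖ * ‖q.eval z‖ * |w z| := by
          simp [Complex.norm_real]
      _ ≤ (Cp * (1 + ‖z‖) ^ N) * (Cq * (1 + ‖z‖) ^ N) * |w z| := by gcongr; exacts [hCp z, hCq z]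
      _ = Cp * Cq * ‖(1 + ‖z‖) ^ (2 * N) * w z‖ := by
          rw [norm_mul, norm_pow, Real.norm_eq_abs, Real.norm_eq_abs,
            abs_of_nonneg (by positivity : (0 : ℝ) ≤ 1 + ‖z‖)]
          ring

theorem weightedInner_sub_C_mul_left (hw : Measurable w)
    (hint : Integrable (fun z : ℂ => (1 + ‖z‖) ^ (2 * N) * w z) μ)
    {f p q : ℂ[X]} (hf : f.natDegree ≤ N) (hp : p.natDegree ≤ N) (hq : q.natDegree ≤ N) (c : ℂ) :
    weightedInner μ w (f - C c * p) q = weightedInner μ w f q - c * weightedInner μ w p q := by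
  have hfq := integrable_eval_mul_conj_eval_mul hw hint hf hq
  have hpq := integrable_eval_mul_conj_eval_mul hw hint hp hq
  simp only [weightedInner, eval_sub, eval_mul, eval_C, sub_mul, mul_assoc] at hfq hpq ⊢
  rw [integral_sub hfq (hpq.const_mul c), integral_const_mul]

theorem weightedInner_X_pow_mul_self (k : ℕ) (p : ℂ[X]) :
    weightedInner μ w (X ^ k * p) p = ∫ z, z ^ k * ((‖p.eval z‖ ^ 2 * w z : ℝ) : ℂ) ∂μ := by
  refine integral_congr_ae (Filter.Eventually.of_forall fun z => ?_)
  simp only [eval_mul, eval_pow, eval_X, mul_assoc, Complex.mul_conj, ← Complex.sq_norm]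
  push_cast
  ring

end WeightedInner

namespace MonicOrth

variable {M : ℕ} {w : ℂ → ℝ} {P : ℕ → ℂ[X]} {h : ℕ → ℝ}

theorem monic (hfam : MonicOrth M w P h) {m : ℕ} (hm : m ≤ M) : (P m).Monic :=
  (hfam.1 m hm).1

theorem natDegree_eq (hfam : MonicOrth M w P h) {m : ℕ} (hm : m ≤ M) : (P m).natDegree = m :=
  (hfam.1 m hm).2

theorem coeff_self (hfam : MonicOrth M w P h) {m : ℕ} (hm : m ≤ M) : (P m).coeff m = 1 := by
  simpa [hfam.natDegree_eq hm] using (hfam.monic hm).coeff_natDegree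

theorem weightedInner_eq (hfam : MonicOrth M w P h) {n m : ℕ} (hn : n ≤ M) (hm : m ≤ M) :
    weightedInner dA w (P n) (P m) = if n = m then (h n : ℂ) else 0 :=
  (hfam.2.2 n hn m hm).trans (by split_ifs <;> simp)

theorem weightedInner_sub_C_mul_of_ne (hfam : MonicOrth M w P h) (hw : Measurable w)
    (hint : Integrable (fun z : ℂ => (1 + ‖z‖) ^ (2 * M) * w z) dA)
    {f : ℂ[X]} (hf : f.natDegree ≤ M) {m n : ℕ} (hm : m ≤ M) (hn : n ≤ M) (hmn : m ≠ n) (c : ℂ) :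
    weightedInner dA w (f - C c * P m) (P n) = weightedInner dA w f (P n) := by
  rw [weightedInner_sub_C_mul_left hw hint hf ((hfam.natDegree_eq hm).trans_le hm)
    ((hfam.natDegree_eq hn).trans_le hn), hfam.weightedInner_eq hm hn, if_neg hmn, mul_zero,
    sub_zero]

theorem weightedInner_eq_coeff_mul (hfam : MonicOrth M w P h) (hw : Measurable w)
    (hint : Integrable (fun z : ℂ => (1 + ‖z‖) ^ (2 * M) * w z) dA)
    {n : ℕ} (hn : n ≤ M) {f : ℂ[X]} (hf : f.degree ≤ n) :
    weightedInner dA w f (P n) = f.coeff n * h n := by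
  suffices ∀ d ≤ n + 1, ∀ f : ℂ[X], f.degree < d → weightedInner dA w f (P n) = f.coeff n * h n from
    this (n + 1) le_rfl f (Order.lt_succ_of_le hf)
  intro d
  induction d with
  | zero =>
    intro _ f hf
    obtain rfl : f = 0 := by simpa using hf
    simp [weightedInner]
  | succ d ih =>
    intro hd f hf
    have hfd : f.degree ≤ d := Order.le_of_lt_succ hf
    have hPd_deg : (P d).natDegree = d := hfam.natDegree_eq (by omega)
    have hsplit := weightedInner_sub_C_mul_left hw hint
      (natDegree_le_of_degree_le (hfd.trans (by exact_mod_cast (by omega : d ≤ M))))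
      (hPd_deg.trans_le (by omega)) ((hfam.natDegree_eq hn).trans_le hn) (f.coeff d)
    rw [ih (by omega) _ (degree_sub_C_coeff_mul_lt (hfam.monic (by omega)) hPd_deg hfd),
      hfam.weightedInner_eq (by omega) hn, coeff_sub, coeff_C_mul] at hsplit
    rcases (show d ≤ n by omega).eq_or_lt with rfl | hdn
    · rw [if_pos rfl, hfam.coeff_self hn] at hsplit
      linear_combination -hsplit
    · rw [if_neg hdn.ne, coeff_eq_zero_of_natDegree_lt (p := P d) (by omega)] at hsplit
      linear_combination -hsplit

end MonicOrth

theorem second_moment_identity_general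
    (n : ℕ) (hn : 2 ≤ n) (w : ℂ → ℝ) (hw : Measurable w)
    (hint : Integrable (fun z : ℂ => (1 + ‖z‖) ^ (2 * n + 4) * w z) dA)
    (P : ℕ → Polynomial ℂ) (h : ℕ → ℝ)
    (hfam : MonicOrth (n + 2) w P h) :
    ∫ z : ℂ, z ^ 2 * ((‖(P n).eval z‖ ^ 2 * w z : ℝ) : ℂ) ∂dA =
      ((P n).coeff (n - 2) - (P (n + 2)).coeff n
        - ((P n).coeff (n - 1) - (P (n + 2)).coeff (n + 1)) * (P (n + 1)).coeff n) *
        (h n : ℝ) := by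
  have hint' : Integrable (fun z : ℂ => (1 + ‖z‖) ^ (2 * (n + 2)) * w z) dA := by
    convert hint using 4; ring
  have hf : (X ^ 2 * P n).natDegree ≤ n + 2 := by
    refine natDegree_mul_le.trans ?_
    rw [natDegree_X_pow, hfam.natDegree_eq (by omega), add_comm]
  set g := X ^ 2 * P n - C ((X ^ 2 * P n).coeff (n + 2)) * P (n + 2) with hg_def
  set r := g - C (g.coeff (n + 1)) * P (n + 1) with hr_def
  have hg : g.degree < ↑(n + 2) := degree_sub_C_coeff_mul_lt (hfam.monic le_rfl)
    (hfam.natDegree_eq le_rfl) (degree_le_of_natDegree_le hf)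
  have hr : r.degree < ↑(n + 1) := degree_sub_C_coeff_mul_lt (hfam.monic (by omega))
    (hfam.natDegree_eq (by omega)) (Order.le_of_lt_succ hg)
  calc _ = weightedInner dA w (X ^ 2 * P n) (P n) := (weightedInner_X_pow_mul_self 2 _).symm
    _ = weightedInner dA w r (P n) := by
      rw [hr_def, hg_def, hfam.weightedInner_sub_C_mul_of_ne hw hint'
          (natDegree_le_of_degree_le hg.le) (by omega) (by omega) (by omega),
        hfam.weightedInner_sub_C_mul_of_ne hw hint' hf le_rfl (by omega) (by omega)]
    _ = r.coeff n * h n :=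
        hfam.weightedInner_eq_coeff_mul hw hint' (by omega) (Order.le_of_lt_succ hr)
    _ = _ := by
      simp [hr_def, hg_def, coeff_X_pow_mul', sub_mul, hn, show 2 ≤ n + 1 by omega,
        show n + 1 - 2 = n - 1 by omega, hfam.coeff_self]

/-- Second moment identity for planar orthogonal polynomials:
`∫_ℂ z²·|P_n(z)|²·w(z) dA(z) = (ℬ_n − ℬ_{n+2} − (𝒜_n − 𝒜_{n+2})·𝒜_{n+1})·h_n`. -/
theorem second_moment_identity
    (n : ℕ) (hn : 2 ≤ n) (w : ℂ → ℝ) (hw : Measurable w) (hw0 : ∀ z, 0 ≤ w z)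
    (hint : Integrable (fun z : ℂ => (1 + ‖z‖) ^ (2 * n + 4) * w z) dA)
    (P : ℕ → Polynomial ℂ) (h : ℕ → ℝ)
    (hfam : MonicOrth (n + 2) w P h) :
    ∫ z : ℂ, z ^ 2 * ((‖(P n).eval z‖ ^ 2 * w z : ℝ) : ℂ) ∂dA =
      ((P n).coeff (n - 2) - (P (n + 2)).coeff n
        - ((P n).coeff (n - 1) - (P (n + 2)).coeff (n + 1)) * (P (n + 1)).coeff n) *
        (h n : ℝ) :=
  second_moment_identity_general n hn w hw hint P h hfam
end

section
/- A vanishing circle integral for holomorphic maps: let 0 < r < 1 and let ψ be holomorphic on the annulus {w ∈ ℂ : r < |w| < 1/r} with ψ'(w) ≠ 0 for every w with |w| = 1. Then ∫_𝕋 [ Re(w²·{ψ,w}) − (1 + Re(w·ψ''(w)/ψ'(w)))² + (3/2)·|1 + w·ψ''(w)/ψ'(w)|² ] · (w / |ψ'(w)|²) ds(w) = 0, as an identity of complex numbers. -/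
/-!
Write `w = e^{iθ}`, `p = w ψ''(w) / ψ'(w)`, `y = Im p` and `N = |ψ'(w)|²` as functions of `θ`.
Since `(ψ''/ψ')' = {ψ, w} + (ψ''/ψ')² / 2`, differentiating along the circle gives
`y' = Re (p + w² {ψ, w} + p² / 2)` and `N' = -2 y N`, while the bracket in the integrand equals
`y' + 2 y² + 1/2`. So the integrand is the derivative of the `2π`-periodic function
`w (y - i/2) / N`, and its integral over a period vanishes.
-/

open MeasureTheory

/-- The point `e^{iθ}` on the unit circle. -/
noncomputable def circpt (θ : ℝ) : ℂ := Complex.exp (θ * Complex.I)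

/-- The pre-Schwarzian derivative `f''/f'`. -/
noncomputable def preSchwarzian (f : ℂ → ℂ) (w : ℂ) : ℂ :=
  deriv (deriv f) w / deriv f w

/-- The Schwarzian derivative `{f, w} = f'''/f' − (3/2)(f''/f')²`. -/
noncomputable def schwarzian (f : ℂ → ℂ) (w : ℂ) : ℂ :=
  deriv (deriv (deriv f)) w / deriv f w - (3 / 2) * (deriv (deriv f) w / deriv f w) ^ 2

open Complex

lemma norm_circpt (θ : ℝ) : ‖circpt θ‖ = 1 := by
  simp [circpt, Complex.norm_exp]

lemma circpt_periodic : Function.Periodic circpt (2 * Real.pi) := fun θ => by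
  simpa [circpt] using Complex.exp_mul_I_periodic (θ : ℂ)

lemma continuous_circpt : Continuous circpt := by
  unfold circpt
  fun_prop

lemma hasDerivAt_circpt (θ : ℝ) : HasDerivAt circpt (I * circpt θ) θ := by
  have h := ((hasDerivAt_id (θ : ℂ)).mul_const I).cexp.comp_ofReal (z := θ)
  rw [one_mul, mul_comm] at h
  exact h

section Schwarzian

variable {f : ℂ → ℂ} {w : ℂ}

lemma hasDerivAt_preSchwarzian (hf : AnalyticAt ℂ f w) (hf' : deriv f w ≠ 0) :
    HasDerivAt (preSchwarzian f) (schwarzian f w + preSchwarzian f w ^ 2 / 2) w := by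
  have h : HasDerivAt (preSchwarzian f) _ w :=
    hf.deriv.deriv.differentiableAt.hasDerivAt.div hf.deriv.differentiableAt.hasDerivAt hf'
  convert h using 1
  simp only [schwarzian, preSchwarzian]
  field_simp
  ring

lemma continuousAt_schwarzian (hf : AnalyticAt ℂ f w) (hf' : deriv f w ≠ 0) :
    ContinuousAt (schwarzian f) w := by
  have h1 := hf.deriv.continuousAt
  have h2 := hf.deriv.deriv.continuousAt
  have h3 := hf.deriv.deriv.deriv.continuousAt
  unfold schwarzian
  fun_prop (disch := assumption)

end Schwarzian

lemma re_sub_sq_add_norm_sq_eq (p s : ℂ) :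
    s.re - (1 + p.re) ^ 2 + 3 / 2 * ‖1 + p‖ ^ 2
      = (p + s + p ^ 2 / 2).re + 2 * p.im ^ 2 + 1 / 2 := by
  rw [Complex.sq_norm, normSq_apply]
  simp only [sq, add_re, one_re, add_im, one_im, zero_add, div_ofNat_re, mul_re]
  ring

lemma hasDerivAt_mul_sub_half_I_div {y N : ℝ → ℝ} {y' t : ℝ} {e : ℝ → ℂ}
    (he : HasDerivAt e (I * e t) t) (hy : HasDerivAt y y' t)
    (hN : HasDerivAt N (-2 * y t * N t) t) (hN0 : N t ≠ 0) :
    HasDerivAt (fun s => e s * ((y s : ℂ) - I / 2) / (N s : ℂ))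
      (((y' + 2 * y t ^ 2 + 1 / 2 : ℝ) : ℂ) * e t / (N t : ℂ)) t := by
  have hN0' : (N t : ℂ) ≠ 0 := by exact_mod_cast hN0
  have h := (he.mul (hy.ofReal_comp.sub_const (I / 2))).div hN.ofReal_comp hN0'
  refine h.congr_deriv ?_
  simp only [Pi.mul_apply]
  push_cast
  field_simp
  linear_combination -(e t) * I_sq

section Circle

variable {ψ : ℂ → ℂ} {θ : ℝ}

lemma hasDerivAt_circpt_mul_preSchwarzian (hψ : AnalyticAt ℂ ψ (circpt θ))
    (hψ' : deriv ψ (circpt θ) ≠ 0) :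
    HasDerivAt (fun t => circpt t * preSchwarzian ψ (circpt t))
      (I * (circpt θ * preSchwarzian ψ (circpt θ) + circpt θ ^ 2 * schwarzian ψ (circpt θ)
        + (circpt θ * preSchwarzian ψ (circpt θ)) ^ 2 / 2)) θ := by
  have h := (hasDerivAt_circpt θ).mul
    ((hasDerivAt_preSchwarzian hψ hψ').comp θ (hasDerivAt_circpt θ))
  refine h.congr_deriv ?_
  simp only [Function.comp_apply]
  ring

lemma hasDerivAt_im_circpt_mul_preSchwarzian (hψ : AnalyticAt ℂ ψ (circpt θ))
    (hψ' : deriv ψ (circpt θ) ≠ 0) :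
    HasDerivAt (fun t => (circpt t * preSchwarzian ψ (circpt t)).im)
      (circpt θ * preSchwarzian ψ (circpt θ) + circpt θ ^ 2 * schwarzian ψ (circpt θ)
        + (circpt θ * preSchwarzian ψ (circpt θ)) ^ 2 / 2).re θ := by
  refine (Complex.imCLM.hasFDerivAt.comp_hasDerivAt θ
    (hasDerivAt_circpt_mul_preSchwarzian hψ hψ')).congr_deriv ?_
  simp

lemma hasDerivAt_norm_deriv_circpt_sq (hψ : AnalyticAt ℂ ψ (circpt θ))
    (hψ' : deriv ψ (circpt θ) ≠ 0) :
    HasDerivAt (fun t => ‖deriv ψ (circpt t)‖ ^ 2)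
      (-2 * (circpt θ * preSchwarzian ψ (circpt θ)).im * ‖deriv ψ (circpt θ)‖ ^ 2) θ := by
  have h := (hψ.deriv.differentiableAt.hasDerivAt.comp θ (hasDerivAt_circpt θ)).norm_sq
  refine h.congr_deriv ?_
  have hrot :
      deriv (deriv ψ) (circpt θ) * (I * circpt θ) * starRingEnd ℂ (deriv ψ (circpt θ))
          = I * (circpt θ * preSchwarzian ψ (circpt θ))
          * ((‖deriv ψ (circpt θ)‖ ^ 2 : ℝ) : ℂ) := by
    rw [Complex.ofReal_pow, ← Complex.mul_conj', preSchwarzian]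
    field_simp
  rw [Complex.inner, Function.comp_apply, hrot, Complex.re_mul_ofReal, Complex.I_mul_re]
  ring

lemma continuous_schwarzian_circpt (hψ : ∀ θ, AnalyticAt ℂ ψ (circpt θ))
    (hψ' : ∀ θ, deriv ψ (circpt θ) ≠ 0) :
    Continuous fun θ => schwarzian ψ (circpt θ) :=
  continuous_iff_continuousAt.2 fun θ =>
    (continuousAt_schwarzian (hψ θ) (hψ' θ)).comp continuous_circpt.continuousAt

lemma continuous_preSchwarzian_circpt (hψ : ∀ θ, AnalyticAt ℂ ψ (circpt θ))
    (hψ' : ∀ θ, deriv ψ (circpt θ) ≠ 0) :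
    Continuous fun θ => preSchwarzian ψ (circpt θ) :=
  continuous_iff_continuousAt.2 fun θ =>
    (hasDerivAt_preSchwarzian (hψ θ) (hψ' θ)).continuousAt.comp
      continuous_circpt.continuousAt

end Circle

/-- A vanishing circle integral for holomorphic maps: for `ψ` holomorphic on the annulus
`{r < |w| < 1/r}` with nonvanishing derivative on the unit circle,
`∫_𝕋 [Re(w²{ψ,w}) − (1 + Re(w ψ''/ψ'))² + (3/2)|1 + w ψ''/ψ'|²]·(w/|ψ'(w)|²) ds(w) = 0`,
the circle integral being parametrised by arc length via `θ ↦ e^{iθ}`. -/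
theorem vanishing_circle_integral
    (r : ℝ) (hr0 : 0 < r) (hr1 : r < 1) (ψ : ℂ → ℂ)
    (hhol : DifferentiableOn ℂ ψ {w : ℂ | r < ‖w‖ ∧ ‖w‖ < 1 / r})
    (hne : ∀ w : ℂ, ‖w‖ = 1 → deriv ψ w ≠ 0) :
    (∫ θ in (0 : ℝ)..(2 * Real.pi),
      ((((circpt θ) ^ 2 * schwarzian ψ (circpt θ)).re
          - (1 + ((circpt θ) * preSchwarzian ψ (circpt θ)).re) ^ 2
          + (3 / 2) * ‖1 + (circpt θ) * preSchwarzian ψ (circpt θ)‖ ^ 2 : ℝ) : ℂ)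
        * (circpt θ) / ((‖deriv ψ (circpt θ)‖ ^ 2 : ℝ) : ℂ)) = 0 := by
  have hann : IsOpen {w : ℂ | r < ‖w‖ ∧ ‖w‖ < 1 / r} :=
    (isOpen_lt continuous_const continuous_norm).inter
      (isOpen_lt continuous_norm continuous_const)
  have hψ (θ : ℝ) : AnalyticAt ℂ ψ (circpt θ) := by
    refine hhol.analyticAt (hann.mem_nhds ?_)
    simp only [Set.mem_ofPred_eq, norm_circpt]
    exact ⟨hr1, one_lt_one_div hr0 hr1⟩
  have hψ' (θ : ℝ) : deriv ψ (circpt θ) ≠ 0 := hne _ (norm_circpt θ)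
  have hN0 (θ : ℝ) : ‖deriv ψ (circpt θ)‖ ^ 2 ≠ 0 :=
    pow_ne_zero 2 (norm_ne_zero_iff.2 (hψ' θ))
  set G : ℂ → ℂ := fun w =>
    w * (((w * preSchwarzian ψ w).im : ℂ) - I / 2) / ((‖deriv ψ w‖ ^ 2 : ℝ) : ℂ)
  refine (intervalIntegral.integral_eq_sub_of_hasDerivAt (f := fun θ => G (circpt θ))
    (fun θ _ => ?_) ?_).trans (sub_eq_zero.2 (congrArg G circpt_periodic.eq))
  · rw [re_sub_sq_add_norm_sq_eq]
    exact hasDerivAt_mul_sub_half_I_div (hasDerivAt_circpt θ)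
      (hasDerivAt_im_circpt_mul_preSchwarzian (hψ θ) (hψ' θ))
      (hasDerivAt_norm_deriv_circpt_sq (hψ θ) (hψ' θ)) (hN0 θ)
  · have hp : Continuous fun θ => circpt θ * preSchwarzian ψ (circpt θ) :=
      continuous_circpt.mul (continuous_preSchwarzian_circpt hψ hψ')
    have hs : Continuous fun θ => circpt θ ^ 2 * schwarzian ψ (circpt θ) :=
      (continuous_circpt.pow 2).mul (continuous_schwarzian_circpt hψ hψ')
    have hN : Continuous fun θ => ((‖deriv ψ (circpt θ)‖ ^ 2 : ℝ) : ℂ) :=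
      Complex.continuous_ofReal.comp (((continuous_iff_continuousAt.2 fun θ =>
        (hψ θ).deriv.continuousAt.comp continuous_circpt.continuousAt).norm).pow 2)
    refine ((Continuous.mul ?_ continuous_circpt).div hN
      fun θ => by exact_mod_cast hN0 θ).intervalIntegrable _ _
    exact Complex.continuous_ofReal.comp (((Complex.continuous_re.comp hs).sub
      ((continuous_const.add (Complex.continuous_re.comp hp)).pow 2)).add
      (continuous_const.mul ((continuous_const.add hp).norm.pow 2)))
end

section
/- Asymptotic expansion in 1/a of integrals against a moving power weight: for every γ ≥ 0 and every nonnegative integer L there exist real coefficients c_{j,k} (for 1 ≤ j+k ≤ L), depending only on γ and L (namely the Taylor coefficients at u = 0 of the function u ↦ |1−u|^{2γ}), such that for every Schwartz function f : ℂ → ℂ there exist C > 0 and a₀ ≥ 1 with: for all a ≥ a₀, | ∫_ℂ |1 − z/a|^{2γ}·f(z) dA(z) − ∫_ℂ f(z) dA(z) − ∑_{1 ≤ j+k ≤ L} c_{j,k}·a^{−j−k}·∫_ℂ z^j·conj(z)^k·f(z) dA(z) | ≤ C·a^{−L−1}. In particular (L = 0), ∫_ℂ |1 − z/a|^{2γ}·f(z)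 dA(z) = ∫_ℂ f(z) dA(z) + O(1/a) as a → ∞. -/
open MeasureTheory

/-!
The weight factors as `|1 - u|^{2γ} = g u * conj (g u)` with `g u = (1 - u)^γ`, and near `0`
`g u = ∑ (-1)^j (γ choose j) u^j` is the binomial series. So the product of the degree-`L` Taylor
polynomials of `g` and `conj ∘ g`, truncated to total degree `L`, approximates the weight to order
`‖u‖^{L+1}` at `0`. Weight and polynomial both grow polynomially, so the remainder is at most
`K ‖u‖^{L+1} (1 + ‖u‖)^M` on all of `ℂ`. At `u = z / a` this is `O(a^{-L-1}) (1 + ‖z‖)^N`, which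
integrates against the Schwartz function `f`, while the polynomial integrates term by term to the
moment sum.
-/

open Asymptotics Filter Topology Finset
open scoped SchwartzMap

noncomputable section

def bidegreeLE (L : ℕ) : Finset (ℕ × ℕ) :=
  (range (L + 1) ×ˢ range (L + 1)).filter fun p => p.1 + p.2 ≤ L

def zConjPoly (c : ℕ → ℕ → ℝ) (L : ℕ) (u : ℂ) : ℂ :=
  ∑ p ∈ bidegreeLE L, ((c p.1 p.2 : ℝ) : ℂ) * u ^ p.1 * (starRingEnd ℂ u) ^ p.2

def powerWeight (γ : ℝ) (u : ℂ) : ℂ := ((‖1 - u‖ ^ (2 * γ) : ℝ) : ℂ)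

def weightCoeff (γ : ℝ) (j k : ℕ) : ℝ :=
  (-1) ^ j * Ring.choose γ j * ((-1) ^ k * Ring.choose γ k)

theorem weightCoeff_zero_zero (γ : ℝ) : weightCoeff γ 0 0 = 1 := by
  simp [weightCoeff]

theorem powerWeight_eq_cpow_mul_conj (γ : ℝ) (u : ℂ) :
    powerWeight γ u = (1 - u) ^ (γ : ℂ) * starRingEnd ℂ ((1 - u) ^ (γ : ℂ)) := by
  rw [Complex.mul_conj, Complex.normSq_eq_norm_sq, Complex.norm_cpow_real, powerWeight,
    ← Real.rpow_mul_natCast (norm_nonneg _), Nat.cast_ofNat, mul_comm]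

theorem one_sub_cpow_sub_sum_isBigO (a : ℂ) (n : ℕ) :
    (fun u : ℂ => (1 - u) ^ a - ∑ k ∈ range n, (-1) ^ k * Ring.choose a k * u ^ k)
      =O[𝓝 0] fun u => ‖u‖ ^ n := by
  have h := (Complex.one_add_cpow_hasFPowerSeriesAt_zero (a := a)).isBigO_sub_partialSum_pow n
  have hneg : Tendsto (fun u : ℂ => -u) (𝓝 0) (𝓝 0) := by
    simpa using (continuous_neg (G := ℂ)).tendsto 0
  refine ((h.comp_tendsto hneg).congr_left fun u => ?_).congr_right fun u => by simp
  simp only [Function.comp_apply, zero_add, ← sub_eq_add_neg, sub_right_inj,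
    FormalMultilinearSeries.partialSum, FormalMultilinearSeries.apply_eq_pow_smul_coeff]
  refine sum_congr rfl fun k _ => ?_
  simp only [neg_pow u, binomialSeries, FormalMultilinearSeries.coeff_ofScalars, smul_eq_mul]
  ring

theorem sum_mul_conj_sum_eq_zConjPoly_add (b : ℕ → ℝ) (L : ℕ) (u : ℂ) :
    (∑ j ∈ range (L + 1), (b j : ℂ) * u ^ j) *
        starRingEnd ℂ (∑ k ∈ range (L + 1), (b k : ℂ) * u ^ k)
      = zConjPoly (fun j k => b j * b k) L u +
        ∑ p ∈ (range (L + 1) ×ˢ range (L + 1)).filter (fun p => ¬ p.1 + p.2 ≤ L),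
          ((b p.1 * b p.2 : ℝ) : ℂ) * u ^ p.1 * (starRingEnd ℂ u) ^ p.2 := by
  rw [zConjPoly, bidegreeLE, sum_filter_add_sum_filter_not, sum_product, map_sum, sum_mul_sum]
  refine sum_congr rfl fun j _ => sum_congr rfl fun k _ => ?_
  simp only [map_mul, map_pow, Complex.conj_ofReal, Complex.ofReal_mul]
  ring

theorem Asymptotics.IsBigO.conj {α : Type*} {l : Filter α} {h : α → ℂ} {k : α → ℝ}
    (hh : h =O[l] k) :
    (fun x => starRingEnd ℂ (h x)) =O[l] k :=
  IsBigO.of_norm_left (by simpa only [RCLike.norm_conj] using hh.norm_left)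

theorem mul_conj_sub_zConjPoly_isBigO {g : ℂ → ℂ} {b : ℕ → ℝ} {L : ℕ}
    (hg : (fun u => g u - ∑ j ∈ range (L + 1), (b j : ℂ) * u ^ j) =O[𝓝 0]
      fun u => ‖u‖ ^ (L + 1)) :
    (fun u => g u * starRingEnd ℂ (g u) - zConjPoly (fun j k => b j * b k) L u)
      =O[𝓝 0] fun u => ‖u‖ ^ (L + 1) := by
  set P : ℂ → ℂ := fun u => ∑ j ∈ range (L + 1), (b j : ℂ) * u ^ j
  have hP : P =O[𝓝 0] fun _ => (1 : ℝ) :=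
    ((continuous_finsetSum _ fun j _ => by fun_prop).tendsto 0).isBigO_one ℝ
  have hpow : (fun u : ℂ => ‖u‖ ^ (L + 1)) =O[𝓝 0] fun _ => (1 : ℝ) :=
    ((continuous_norm.pow _).tendsto 0).isBigO_one ℝ
  have hg_one : g =O[𝓝 0] fun _ => (1 : ℝ) :=
    (hP.add (hg.trans hpow)).congr_left fun u => add_sub_cancel _ _
  have hhigh : ∀ p ∈ (range (L + 1) ×ˢ range (L + 1)).filter (fun p => ¬ p.1 + p.2 ≤ L),
      (fun u : ℂ => ((b p.1 * b p.2 : ℝ) : ℂ) * u ^ p.1 * (starRingEnd ℂ u) ^ p.2)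
        =O[𝓝 0] fun u => ‖u‖ ^ (L + 1) := by
    intro p hp
    have hLp : L + 1 ≤ p.1 + p.2 := by simp only [mem_filter] at hp; omega
    refine IsBigO.of_bound |b p.1 * b p.2| ?_
    filter_upwards [Metric.closedBall_mem_nhds (0 : ℂ) one_pos] with u hu
    rw [mem_closedBall_zero_iff] at hu
    rw [norm_mul, norm_mul, norm_pow, norm_pow, RCLike.norm_conj, Complex.norm_real,
      Real.norm_eq_abs, mul_assoc, ← pow_add, norm_pow, norm_norm]
    exact mul_le_mul_of_nonneg_left (pow_le_pow_of_le_one (norm_nonneg u) hu hLp) (abs_nonneg _)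
  have hsplit : ∀ u, g u * starRingEnd ℂ (g u) - zConjPoly (fun j k => b j * b k) L u
      = (g u - P u) * starRingEnd ℂ (g u) + P u * starRingEnd ℂ (g u - P u)
        + ∑ p ∈ (range (L + 1) ×ˢ range (L + 1)).filter (fun p => ¬ p.1 + p.2 ≤ L),
            ((b p.1 * b p.2 : ℝ) : ℂ) * u ^ p.1 * (starRingEnd ℂ u) ^ p.2 := by
    intro u
    rw [eq_sub_of_add_eq (sum_mul_conj_sum_eq_zConjPoly_add b L u).symm, map_sub]
    ring
  refine ((IsBigO.add ?_ ?_).add (IsBigO.sum hhigh)).congr_left fun u => by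
    rw [Finset.sum_apply]
    exact (hsplit u).symm
  · simpa only [mul_one] using hg.mul hg_one.conj
  · simpa only [one_mul] using hP.mul hg.conj

theorem powerWeight_sub_zConjPoly_isBigO (γ : ℝ) (L : ℕ) :
    (fun u => powerWeight γ u - zConjPoly (weightCoeff γ) L u) =O[𝓝 0]
      fun u => ‖u‖ ^ (L + 1) := by
  refine (mul_conj_sub_zConjPoly_isBigO (b := fun j => (-1) ^ j * Ring.choose γ j) ?_).congr_left
    fun u => by rw [powerWeight_eq_cpow_mul_conj]; rfl
  simpa [Complex.ofReal_choose] using one_sub_cpow_sub_sum_isBigO (γ : ℂ) (L + 1)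

theorem exists_norm_le_of_isBigO_nhds_zero {E F : Type*} [SeminormedAddCommGroup E]
    [SeminormedAddCommGroup F] {f : E → F} {n : ℕ} (h : f =O[𝓝 0] fun u => ‖u‖ ^ n) :
    ∃ δ > 0, ∃ C, 0 ≤ C ∧ ∀ u, ‖u‖ ≤ δ → ‖f u‖ ≤ C * ‖u‖ ^ n := by
  obtain ⟨C, hC, hf⟩ := h.exists_nonneg
  obtain ⟨δ, hδ, hball⟩ := Metric.nhds_basis_closedBall.eventually_iff.mp hf.bound
  refine ⟨δ, hδ, C, hC, fun u hu => ?_⟩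
  simpa using hball (mem_closedBall_zero_iff.mpr hu)

theorem exists_norm_le_pow_mul_one_add_norm_pow {E F : Type*} [SeminormedAddCommGroup E]
    [SeminormedAddCommGroup F] {f : E → F} {n M : ℕ} {A : ℝ}
    (h0 : f =O[𝓝 0] fun u => ‖u‖ ^ n) (hgrowth : ∀ u, ‖f u‖ ≤ A * (1 + ‖u‖) ^ M) :
    ∃ K, 0 ≤ K ∧ ∀ u, ‖f u‖ ≤ K * (‖u‖ ^ n * (1 + ‖u‖) ^ M) := by
  obtain ⟨δ, hδ, B, hB, hnear⟩ := exists_norm_le_of_isBigO_nhds_zero h0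
  have hA : 0 ≤ A := by simpa using (norm_nonneg _).trans (hgrowth 0)
  refine ⟨max B (A / δ ^ n), by positivity, fun u => ?_⟩
  rcases le_or_gt ‖u‖ δ with hu | hu
  · have h1 : 1 ≤ (1 + ‖u‖) ^ M := one_le_pow₀ (by linarith [norm_nonneg u])
    calc ‖f u‖ ≤ B * ‖u‖ ^ n := hnear u hu
      _ ≤ B * (‖u‖ ^ n * (1 + ‖u‖) ^ M) := by
          gcongr
          exact le_mul_of_one_le_right (by positivity) h1
      _ ≤ _ := by gcongr; exact le_max_left _ _
  · calc ‖f u‖ ≤ A * (1 + ‖u‖) ^ M := hgrowth u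
      _ ≤ A / δ ^ n * (‖u‖ ^ n * (1 + ‖u‖) ^ M) := by
          rw [div_mul_eq_mul_div, le_div_iff₀ (by positivity), mul_comm (‖u‖ ^ n), ← mul_assoc]
          gcongr
      _ ≤ _ := by gcongr; exact le_max_right _ _

theorem norm_powerWeight_le {γ : ℝ} (hγ : 0 ≤ γ) (u : ℂ) :
    ‖powerWeight γ u‖ ≤ (1 + ‖u‖) ^ ⌈2 * γ⌉₊ := by
  rw [powerWeight, Complex.norm_real, Real.norm_of_nonneg (by positivity)]
  calc ‖1 - u‖ ^ (2 * γ) ≤ (1 + ‖u‖) ^ (2 * γ) :=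
        Real.rpow_le_rpow (norm_nonneg _) (by simpa using norm_sub_le (1 : ℂ) u) (by positivity)
    _ ≤ (1 + ‖u‖) ^ (⌈2 * γ⌉₊ : ℝ) :=
        Real.rpow_le_rpow_of_exponent_le (by linarith [norm_nonneg u]) (Nat.le_ceil _)
    _ = _ := Real.rpow_natCast _ _

theorem norm_zConjPoly_le (c : ℕ → ℕ → ℝ) (L : ℕ) (u : ℂ) :
    ‖zConjPoly c L u‖ ≤ (∑ p ∈ bidegreeLE L, |c p.1 p.2|) * (1 + ‖u‖) ^ L := by
  rw [zConjPoly, sum_mul]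
  refine (norm_sum_le _ _).trans (sum_le_sum fun p hp => ?_)
  have hpL : p.1 + p.2 ≤ L := (mem_filter.mp hp).2
  rw [norm_mul, norm_mul, norm_pow, norm_pow, RCLike.norm_conj, Complex.norm_real,
    Real.norm_eq_abs, mul_assoc, ← pow_add]
  gcongr
  calc ‖u‖ ^ (p.1 + p.2) ≤ (1 + ‖u‖) ^ (p.1 + p.2) := by gcongr; linarith
    _ ≤ (1 + ‖u‖) ^ L := pow_le_pow_right₀ (by linarith [norm_nonneg u]) hpL

theorem norm_powerWeight_sub_zConjPoly_le {γ : ℝ} (hγ : 0 ≤ γ) (c : ℕ → ℕ → ℝ) (L : ℕ)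
    (u : ℂ) :
    ‖powerWeight γ u - zConjPoly c L u‖
      ≤ (1 + ∑ p ∈ bidegreeLE L, |c p.1 p.2|) * (1 + ‖u‖) ^ max ⌈2 * γ⌉₊ L := by
  have hu : 1 ≤ 1 + ‖u‖ := by linarith [norm_nonneg u]
  have hc : 0 ≤ ∑ p ∈ bidegreeLE L, |c p.1 p.2| := sum_nonneg fun _ _ => abs_nonneg _
  calc ‖powerWeight γ u - zConjPoly c L u‖ ≤ ‖powerWeight γ u‖ + ‖zConjPoly c L u‖ :=
        norm_sub_le _ _
    _ ≤ (1 + ‖u‖) ^ ⌈2 * γ⌉₊ + (∑ p ∈ bidegreeLE L, |c p.1 p.2|) * (1 + ‖u‖) ^ L :=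
        add_le_add (norm_powerWeight_le hγ u) (norm_zConjPoly_le c L u)
    _ ≤ (1 + ‖u‖) ^ max ⌈2 * γ⌉₊ L
          + (∑ p ∈ bidegreeLE L, |c p.1 p.2|) * (1 + ‖u‖) ^ max ⌈2 * γ⌉₊ L := by
        gcongr
        exacts [le_max_left _ _, le_max_right _ _]
    _ = _ := by ring

theorem norm_div_le_of_one_le {a : ℝ} (ha : 1 ≤ a) (z : ℂ) : ‖z / a‖ ≤ ‖z‖ := by
  rw [norm_div, Complex.norm_real, Real.norm_of_nonneg (by linarith)]
  exact div_le_self (norm_nonneg z) ha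

theorem norm_comp_div_le {F : Type*} [SeminormedAddCommGroup F] {E : ℂ → F} {K : ℝ} {n M : ℕ}
    (hK : 0 ≤ K) (hE : ∀ u, ‖E u‖ ≤ K * (‖u‖ ^ n * (1 + ‖u‖) ^ M)) {a : ℝ} (ha : 1 ≤ a)
    (z : ℂ) : ‖E (z / a)‖ ≤ K / a ^ n * (1 + ‖z‖) ^ (n + M) := by
  have hza : ‖z / a‖ = ‖z‖ / a := by
    rw [norm_div, Complex.norm_real, Real.norm_of_nonneg (by linarith)]
  calc ‖E (z / a)‖ ≤ K * (‖z / a‖ ^ n * (1 + ‖z / a‖) ^ M) := hE _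
    _ = K / a ^ n * (‖z‖ ^ n * (1 + ‖z / a‖) ^ M) := by rw [hza, div_pow]; ring
    _ ≤ K / a ^ n * ((1 + ‖z‖) ^ n * (1 + ‖z‖) ^ M) := by
        gcongr
        · linarith [norm_nonneg z]
        · exact norm_div_le_of_one_le ha z
    _ = _ := by rw [pow_add]

instance isAddHaarMeasure_dA : dA.IsAddHaarMeasure :=
  Measure.IsAddHaarMeasure.smul _ (by simp [Real.pi_pos]) ENNReal.ofReal_ne_top

section Integrals

variable {D : Type*} [NormedAddCommGroup D] [NormedSpace ℝ D] [MeasurableSpace D] [BorelSpace D]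
  [SecondCountableTopology D] {μ : Measure D} [μ.HasTemperateGrowth]

theorem SchwartzMap.integrable_one_add_norm_pow_mul {V : Type*} [NormedAddCommGroup V]
    [NormedSpace ℝ V] (f : 𝓢(D, V)) (k : ℕ) :
    Integrable (fun x => (1 + ‖x‖) ^ k * ‖f x‖) μ := by
  have h : ∀ x, (1 + ‖x‖) ^ k * ‖f x‖
      = ∑ i ∈ range (k + 1), (k.choose i : ℝ) * (‖x‖ ^ i * ‖f x‖) := by
    intro x
    rw [add_comm, add_pow, sum_mul]
    refine sum_congr rfl fun i _ => ?_
    rw [one_pow]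
    ring
  simp_rw [h]
  exact integrable_finsetSum _ fun i _ => (f.integrable_pow_mul μ i).const_mul _

theorem SchwartzMap.integrable_mul_of_norm_le (f : 𝓢(D, ℂ)) {h : D → ℂ}
    (hh : AEStronglyMeasurable h μ) {C : ℝ} {k : ℕ} (hb : ∀ x, ‖h x‖ ≤ C * (1 + ‖x‖) ^ k) :
    Integrable (fun x => h x * f x) μ :=
  ((f.integrable_one_add_norm_pow_mul k).const_mul C).mono'
    (hh.mul f.continuous.aestronglyMeasurable) (ae_of_all _ fun x => by
      rw [norm_mul, ← mul_assoc]
      exact mul_le_mul_of_nonneg_right (hb x) (norm_nonneg _))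

theorem SchwartzMap.norm_integral_mul_le (f : 𝓢(D, ℂ)) {h : D → ℂ} {C : ℝ} {k : ℕ}
    (hb : ∀ x, ‖h x‖ ≤ C * (1 + ‖x‖) ^ k) :
    ‖∫ x, h x * f x ∂μ‖ ≤ C * ∫ x, (1 + ‖x‖) ^ k * ‖f x‖ ∂μ := by
  rw [← integral_const_mul]
  refine norm_integral_le_of_norm_le ((f.integrable_one_add_norm_pow_mul k).const_mul C)
    (ae_of_all _ fun x => ?_)
  rw [norm_mul, ← mul_assoc]
  exact mul_le_mul_of_nonneg_right (hb x) (norm_nonneg _)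

end Integrals

section ComplexIntegrals

variable {μ : Measure ℂ} [μ.HasTemperateGrowth]

theorem integrable_zConjPoly_mul (f : 𝓢(ℂ, ℂ)) (c : ℕ → ℕ → ℝ) (L : ℕ) :
    Integrable (fun z => zConjPoly c L z * f z) μ :=
  f.integrable_mul_of_norm_le (by unfold zConjPoly; fun_prop : Continuous _).aestronglyMeasurable
    (norm_zConjPoly_le c L)

theorem integral_zConjPoly_mul (f : 𝓢(ℂ, ℂ)) (c : ℕ → ℕ → ℝ) (L : ℕ) :
    ∫ z, zConjPoly c L z * f z ∂μ = ∑ p ∈ bidegreeLE L,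
      ((c p.1 p.2 : ℝ) : ℂ) * ∫ z, z ^ p.1 * (starRingEnd ℂ z) ^ p.2 * f z ∂μ := by
  have hmon : ∀ p : ℕ × ℕ, Integrable (fun z => z ^ p.1 * (starRingEnd ℂ z) ^ p.2 * f z) μ :=
    fun p => f.integrable_mul_of_norm_le (by fun_prop : Continuous _).aestronglyMeasurable
      (C := 1) (k := p.1 + p.2) fun z => by
        rw [norm_mul, norm_pow, norm_pow, RCLike.norm_conj, ← pow_add, one_mul]
        gcongr
        linarith
  have hsum : ∀ z, zConjPoly c L z * f z = ∑ p ∈ bidegreeLE L,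
      ((c p.1 p.2 : ℝ) : ℂ) * (z ^ p.1 * (starRingEnd ℂ z) ^ p.2 * f z) := fun z => by
    rw [zConjPoly, sum_mul]
    exact sum_congr rfl fun p _ => by ring
  simp_rw [hsum]
  rw [integral_finsetSum _ fun p _ => (hmon p).const_mul _]
  simp_rw [integral_const_mul]

theorem integrable_powerWeight_div_mul (f : 𝓢(ℂ, ℂ)) {γ : ℝ} (hγ : 0 ≤ γ) {a : ℝ}
    (ha : 1 ≤ a) : Integrable (fun z => powerWeight γ (z / a) * f z) μ :=
  f.integrable_mul_of_norm_le
    (by unfold powerWeight; fun_prop (disch := positivity) : Continuous _).aestronglyMeasurable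
    (C := 1) fun z => by
      rw [one_mul]
      exact (norm_powerWeight_le hγ _).trans (by gcongr; exact norm_div_le_of_one_le ha z)

theorem zConjPoly_div (c : ℕ → ℕ → ℝ) (L : ℕ) (a : ℝ) (z : ℂ) :
    zConjPoly c L (z / a) = zConjPoly (fun j k => c j k / a ^ (j + k)) L z := by
  refine sum_congr rfl fun p _ => ?_
  simp only [map_div₀, Complex.conj_ofReal, div_pow, Complex.ofReal_div, Complex.ofReal_pow]
  field_simp
  ring

theorem sum_bidegreeLE_eq_add_sum {M : Type*} [AddCommMonoid M] (L : ℕ) (F : ℕ × ℕ → M) :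
    ∑ p ∈ bidegreeLE L, F p = F (0, 0) +
      ∑ p ∈ (range (L + 1) ×ˢ range (L + 1)).filter (fun p => 1 ≤ p.1 + p.2 ∧ p.1 + p.2 ≤ L),
        F p := by
  rw [← add_sum_erase _ _ (show (0, 0) ∈ bidegreeLE L by simp [bidegreeLE])]
  congr 2
  ext p
  simp only [bidegreeLE, mem_erase, mem_filter, mem_product, mem_range, ne_eq, Prod.ext_iff]
  omega

theorem integral_mul_sub_expansion (f : 𝓢(ℂ, ℂ)) {c : ℕ → ℕ → ℝ} (hc : c 0 0 = 1) (L : ℕ)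
    {w : ℂ → ℂ} (hw : Integrable (fun z => w z * f z) μ) (a : ℝ) :
    (∫ z, w z * f z ∂μ) - (∫ z, f z ∂μ)
      - ∑ p ∈ (range (L + 1) ×ˢ range (L + 1)).filter (fun p => 1 ≤ p.1 + p.2 ∧ p.1 + p.2 ≤ L),
          ((c p.1 p.2 / a ^ (p.1 + p.2) : ℝ) : ℂ) *
            ∫ z, z ^ p.1 * (starRingEnd ℂ z) ^ p.2 * f z ∂μ
      = ∫ z, (w z - zConjPoly c L (z / a)) * f z ∂μ := by
  simp_rw [zConjPoly_div c L a, sub_mul]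
  rw [integral_sub hw (integrable_zConjPoly_mul f _ L), integral_zConjPoly_mul,
    sum_bidegreeLE_eq_add_sum]
  simp only [hc, add_zero, pow_zero, div_one, one_mul, mul_one, Complex.ofReal_one]
  ring

end ComplexIntegrals

end

/-- Asymptotic expansion in `1/a` of integrals of Schwartz functions against the moving
power weight `|1 − z/a|^{2γ}`: there are real coefficients `c_{j,k}` depending only on
`γ` and `L` — namely the Taylor coefficients at `u = 0` of `u ↦ |1−u|^{2γ}`, characterised
by the local Taylor bound below — such that for every Schwartz function `f`,
`∫ |1−z/a|^{2γ} f dA = ∫ f dA + ∑_{1 ≤ j+k ≤ L} c_{j,k} a^{−j−k} ∫ z^j conj(z)^k f dA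
  + O(a^{−L−1})` as `a → ∞`. -/
theorem moving_point_charge_expansion (γ : ℝ) (hγ : 0 ≤ γ) (L : ℕ) :
    ∃ c : ℕ → ℕ → ℝ,
      c 0 0 = 1 ∧
      (∃ δ : ℝ, 0 < δ ∧ ∃ Cδ : ℝ, ∀ u : ℂ, ‖u‖ ≤ δ →
        ‖(((‖1 - u‖ ^ (2 * γ) : ℝ) : ℂ) -
          ∑ p ∈ (Finset.range (L + 1) ×ˢ Finset.range (L + 1)).filter
              (fun p => p.1 + p.2 ≤ L),
            ((c p.1 p.2 : ℝ) : ℂ) * u ^ p.1 * ((starRingEnd ℂ) u) ^ p.2)‖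
          ≤ Cδ * ‖u‖ ^ (L + 1)) ∧
      ∀ f : SchwartzMap ℂ ℂ, ∃ C : ℝ, 0 < C ∧ ∃ a₀ : ℝ, 1 ≤ a₀ ∧
        ∀ a : ℝ, a₀ ≤ a →
          ‖
            ((∫ z : ℂ, ((‖1 - z / (a : ℂ)‖ ^ (2 * γ) : ℝ) : ℂ) * f z ∂dA)
              - (∫ z : ℂ, f z ∂dA)
              - ∑ p ∈ (Finset.range (L + 1) ×ˢ Finset.range (L + 1)).filter
                  (fun p => 1 ≤ p.1 + p.2 ∧ p.1 + p.2 ≤ L),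
                  ((c p.1 p.2 / a ^ (p.1 + p.2) : ℝ) : ℂ) *
                    ∫ z : ℂ, z ^ p.1 * ((starRingEnd ℂ) z) ^ p.2 * f z ∂dA)‖
            ≤ C / a ^ (L + 1) := by
  have hTaylor := powerWeight_sub_zConjPoly_isBigO γ L
  obtain ⟨δ, hδ, Cδ, -, hnear⟩ := exists_norm_le_of_isBigO_nhds_zero hTaylor
  obtain ⟨K, hK, hglobal⟩ := exists_norm_le_pow_mul_one_add_norm_pow hTaylor
    (norm_powerWeight_sub_zConjPoly_le hγ (weightCoeff γ) L)
  refine ⟨weightCoeff γ, weightCoeff_zero_zero γ, ⟨δ, hδ, Cδ, hnear⟩, fun f => ?_⟩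
  set J := ∫ z, (1 + ‖z‖) ^ (L + 1 + max ⌈2 * γ⌉₊ L) * ‖f z‖ ∂dA
  have hJ : 0 ≤ J := integral_nonneg fun z => by positivity
  refine ⟨K * J + 1, by positivity, 1, le_rfl, fun a ha => ?_⟩
  calc _ = ‖∫ z, (powerWeight γ (z / a) - zConjPoly (weightCoeff γ) L (z / a)) * f z ∂dA‖ :=
        congrArg norm (integral_mul_sub_expansion f (weightCoeff_zero_zero γ) L
          (integrable_powerWeight_div_mul f hγ ha) a)
    _ ≤ K / a ^ (L + 1) * J := f.norm_integral_mul_le (norm_comp_div_le hK hglobal ha)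
    _ ≤ (K * J + 1) / a ^ (L + 1) := by
        rw [div_mul_eq_mul_div]
        gcongr
        linarith
end
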